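/- arXiv:1807.07781 — 4 statements merged into one kernel-verified Lean document; each statement's English description precedes it below -/
import Mathlib

section
/- Let I ⊆ ℝ be an open interval, and let P, Q : I → ℝ be differentiable functions with P(x) ≠ 0 for all x ∈ I. Suppose y : ℝ → ℝ is twice differentiable on I with y''(x) + P(x)y'(x) + Q(x)y(x) = 0 on I, h : ℝ → ℝ is twice differentiable on I with P(x)h'(x) + Q(x)h(x) = 0 on I, and f : ℝ → ℝ is differentiable on I with f'(x) = P(x)f(x) on I. Then for every x ∈ I the function x ↦ f(x)(y(x)h'(x) − h(x)y'(x)) has derivative at x equal to f(x)·(Q(x)² + Q(x)P'(x) − P(x)Q'(x))/P(x)² · h(x)y(x). (Equivalently, ∫ f(x)h(x)[(Q²(x)+W(Q,P)(x))/P²(x)]y(x)dx = −f(x)h(x)[(Q(x)/P(x))y(x) + y'(x)] + c, where W(Q,P) = QP' − PQ'.) -/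
/-!
With `f' = P f`, the product rule gives the Lagrange identity
`(f (y h' - h y'))' = f (y (h'' + P h' + Q h) - h (y'' + P y' + Q y))`.
The second bracket vanishes by the equation for `y`, and the first reduces to `h''`, which is
computed by differentiating `h' = -(Q / P) h`.
-/

theorem hasDerivAt_integratingFactor_mul_wronskian {f y y' y'' h h' h'' : ℝ → ℝ} {x p q : ℝ}
    (hf : HasDerivAt f (p * f x) x)
    (hy : HasDerivAt y (y' x) x) (hy' : HasDerivAt y' (y'' x) x)
    (hh : HasDerivAt h (h' x) x) (hh' : HasDerivAt h' (h'' x) x) :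
    HasDerivAt (fun t => f t * (y t * h' t - h t * y' t))
      (f x * (y x * (h'' x + p * h' x + q * h x) - h x * (y'' x + p * y' x + q * y x))) x :=
  (hf.mul ((hy.mul hh').sub (hh.mul hy'))).congr_deriv <| by
    simp only [Pi.sub_apply, Pi.mul_apply]
    ring

theorem HasDerivAt.eq_zero_of_eqOn_zero {g : ℝ → ℝ} {g' x : ℝ} {I : Set ℝ} (hI : IsOpen I)
    (hx : x ∈ I) (hg : HasDerivAt g g' x) (hzero : Set.EqOn g 0 I) : g' = 0 :=
  hg.unique <| (hasDerivAt_const x 0).congr_of_eventuallyEq <|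
    hzero.eventuallyEq_of_mem (hI.mem_nhds hx)

theorem second_deriv_eq_of_first_order_linear {I : Set ℝ} (hI : IsOpen I)
    {P P' Q Q' h h' h'' : ℝ → ℝ} {x : ℝ} (hx : x ∈ I)
    (hP : HasDerivAt P (P' x) x) (hQ : HasDerivAt Q (Q' x) x) (hPx : P x ≠ 0)
    (hh : HasDerivAt h (h' x) x) (hh' : HasDerivAt h' (h'' x) x)
    (hode : ∀ t ∈ I, P t * h' t + Q t * h t = 0) :
    h'' x = (Q x ^ 2 + Q x * P' x - P x * Q' x) / P x ^ 2 * h x := by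
  have hode' : P' x * h' x + P x * h'' x + (Q' x * h x + Q x * h' x) = 0 :=
    ((hP.mul hh').add (hQ.mul hh)).eq_zero_of_eqOn_zero hI hx hode
  have hh'x : h' x = -(Q x * h x) / P x := by
    rw [eq_div_iff hPx]
    linarith [hode x hx]
  rw [hh'x] at hode'
  field_simp at hode' ⊢
  linarith

theorem lagrangian_identity_h_no_second_derivative_general
    (I : Set ℝ) (hI : IsOpen I)
    (P P' Q Q' : ℝ → ℝ) (y y' y'' h h' h'' f : ℝ → ℝ)
    (hP : ∀ x ∈ I, HasDerivAt P (P' x) x)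
    (hQ : ∀ x ∈ I, HasDerivAt Q (Q' x) x)
    (hPne : ∀ x ∈ I, P x ≠ 0)
    (hy : ∀ x ∈ I, HasDerivAt y (y' x) x)
    (hy' : ∀ x ∈ I, HasDerivAt y' (y'' x) x)
    (hodey : ∀ x ∈ I, y'' x + P x * y' x + Q x * y x = 0)
    (hh : ∀ x ∈ I, HasDerivAt h (h' x) x)
    (hh' : ∀ x ∈ I, HasDerivAt h' (h'' x) x)
    (hodeh : ∀ x ∈ I, P x * h' x + Q x * h x = 0)
    (hf : ∀ x ∈ I, HasDerivAt f (P x * f x) x) :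
    ∀ x ∈ I, HasDerivAt (fun t => f t * (y t * h' t - h t * y' t))
      (f x * ((Q x ^ 2 + Q x * P' x - P x * Q' x) / P x ^ 2) * h x * y x) x := by
  intro x hx
  have hh''x := second_deriv_eq_of_first_order_linear hI hx (hP x hx) (hQ x hx) (hPne x hx)
    (hh x hx) (hh' x hx) hodeh
  refine (hasDerivAt_integratingFactor_mul_wronskian (q := Q x) (hf x hx) (hy x hx)
    (hy' x hx) (hh x hx) (hh' x hx)).congr_deriv ?_
  rw [add_assoc (h'' x), hodeh x hx, hodey x hx, hh''x]
  ring

/-- Lagrangian-method identity with auxiliary function `h` satisfying `P h' + Q h = 0`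
(deleting the second-derivative term): if `P`, `Q` are differentiable with `P ≠ 0` on `I`,
`y'' + P y' + Q y = 0`, and `f' = P f` on the open interval `I`, then
`x ↦ f x * (y x * h' x - h x * y' x)` has derivative
`f x * ((Q x ^ 2 + Q x * P' x - P x * Q' x) / P x ^ 2) * h x * y x` at every point of `I`. -/
theorem lagrangian_identity_h_no_second_derivative
    (I : Set ℝ) (hI : IsOpen I) (hIconn : I.OrdConnected)
    (P P' Q Q' : ℝ → ℝ) (y y' y'' h h' h'' f : ℝ → ℝ)
    (hP : ∀ x ∈ I, HasDerivAt P (P' x) x)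
    (hQ : ∀ x ∈ I, HasDerivAt Q (Q' x) x)
    (hPne : ∀ x ∈ I, P x ≠ 0)
    (hy : ∀ x ∈ I, HasDerivAt y (y' x) x)
    (hy' : ∀ x ∈ I, HasDerivAt y' (y'' x) x)
    (hodey : ∀ x ∈ I, y'' x + P x * y' x + Q x * y x = 0)
    (hh : ∀ x ∈ I, HasDerivAt h (h' x) x)
    (hh' : ∀ x ∈ I, HasDerivAt h' (h'' x) x)
    (hodeh : ∀ x ∈ I, P x * h' x + Q x * h x = 0)
    (hf : ∀ x ∈ I, HasDerivAt f (P x * f x) x) :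
    ∀ x ∈ I, HasDerivAt (fun t => f t * (y t * h' t - h t * y' t))
      (f x * ((Q x ^ 2 + Q x * P' x - P x * Q' x) / P x ^ 2) * h x * y x) x :=
  lagrangian_identity_h_no_second_derivative_general I hI P P' Q Q' y y' y'' h h' h'' f hP hQ hPne
    hy hy' hodey hh hh' hodeh hf
end

section
/- Fix real numbers a > 1 and α with α ≠ 0 and α ≠ 1, and consider the Heun equation with parameters (a, q; α, β, γ, δ) = (a, α(1−α); α, 1−α, 1, 0) (so ε = 1): y''(x) + (1/x + 1/(x−a))y'(x) + (α(1−α)x − α(1−α))/(x(x−1)(x−a)) y(x) = 0. Let I ⊆ ℝ be an open interval with 0, 1, a ∉ I and let y : ℝ → ℝ be twice differentiable on I solving this equation on I. Then for every x ∈ I the function x ↦ x(a−x)y'(x)/(α(1−α)) has derivative at x equal to y(x). (Equivalently, ∫ y(x)dx = (x(a−x)/(α(1−α))) y'(x) + c; applied to the local Heun function this gives ∫ H_ℓ(a,α−α²;α,1−α,1,0;x)dx = (x(a−x)/(α(1−α))) H'_ℓ(a,α−α²;α,1−α,1,0;x) + c.) -/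
/-!
Multiplying the equation by `x (x - a)`, the numerator `α(1-α)(x-1)` of the potential cancels the
factor `x - 1`, and what remains is the exact equation `(x (x - a) y')' + α(1-α) y = 0`.
Hence `x (a - x) y' / (α(1-α))` is a primitive of `y`.
-/

theorem hasDerivAt_mul_sub_mul {f : ℝ → ℝ} {f' a x : ℝ} (hf : HasDerivAt f f' x) :
    HasDerivAt (fun t => t * (a - t) * f t) ((a - 2 * x) * f x + x * (a - x) * f') x := by
  have hquad := (hasDerivAt_id' x).fun_mul ((hasDerivAt_const x a).fun_sub (hasDerivAt_id' x))
  exact (hquad.fun_mul hf).congr_deriv (by ring)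

theorem heun_special_exact_form {a α x Y Y' Y'' : ℝ} (hx0 : x ≠ 0) (hx1 : x ≠ 1) (hxa : x ≠ a)
    (h : Y'' + (1 / x + 1 / (x - a)) * Y'
      + ((α * (1 - α) * x - α * (1 - α)) / (x * (x - 1) * (x - a))) * Y = 0) :
    (a - 2 * x) * Y' + x * (a - x) * Y'' = α * (1 - α) * Y := by
  have hx1' : x - 1 ≠ 0 := sub_ne_zero.mpr hx1
  have hxa' : x - a ≠ 0 := sub_ne_zero.mpr hxa
  have hpot : (α * (1 - α) * x - α * (1 - α)) / (x * (x - 1) * (x - a))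
      = α * (1 - α) / (x * (x - a)) := by
    field_simp
  rw [hpot] at h
  field_simp at h
  linear_combination -h

theorem heun_integral_special_parameters_general
    (a α : ℝ) (hα0 : α ≠ 0) (hα1 : α ≠ 1)
    (I : Set ℝ)
    (h0 : (0 : ℝ) ∉ I) (h1 : (1 : ℝ) ∉ I) (hai : a ∉ I)
    (y y' y'' : ℝ → ℝ)
    (hy' : ∀ x ∈ I, HasDerivAt y' (y'' x) x)
    (hode : ∀ x ∈ I, y'' x + (1 / x + 1 / (x - a)) * y' x
      + ((α * (1 - α) * x - α * (1 - α)) / (x * (x - 1) * (x - a))) * y x = 0) :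
    ∀ x ∈ I, HasDerivAt (fun t => t * (a - t) * y' t / (α * (1 - α))) (y x) x := by
  intro x hx
  have hα : α * (1 - α) ≠ 0 := mul_ne_zero hα0 (sub_ne_zero.mpr (Ne.symm hα1))
  have hexact := heun_special_exact_form (ne_of_mem_of_not_mem hx h0)
    (ne_of_mem_of_not_mem hx h1) (ne_of_mem_of_not_mem hx hai) (hode x hx)
  have h := (hasDerivAt_mul_sub_mul (a := a) (hy' x hx)).div_const (α * (1 - α))
  rwa [hexact, mul_div_cancel_left₀ _ hα] at h

/-- Integral of a solution of the Heun equation with parameters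
`(a, α(1-α); α, 1-α, 1, 0)` (so `ε = 1`): for `a > 1`, `α ≠ 0`, `α ≠ 1` and any solution
`y` of `y'' + (1/x + 1/(x-a)) y' + (α(1-α)x - α(1-α))/(x(x-1)(x-a)) y = 0` on an open
interval `I` avoiding `0`, `1`, `a`, the function `x ↦ x(a-x)y'(x)/(α(1-α))` has
derivative `y x` at every point of `I` (i.e. `∫ y dx = x(a-x)y'/(α(1-α)) + c`). -/
theorem heun_integral_special_parameters
    (a α : ℝ) (ha : 1 < a) (hα0 : α ≠ 0) (hα1 : α ≠ 1)
    (I : Set ℝ) (hI : IsOpen I) (hIconn : I.OrdConnected)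
    (h0 : (0 : ℝ) ∉ I) (h1 : (1 : ℝ) ∉ I) (hai : a ∉ I)
    (y y' y'' : ℝ → ℝ)
    (hy : ∀ x ∈ I, HasDerivAt y (y' x) x)
    (hy' : ∀ x ∈ I, HasDerivAt y' (y'' x) x)
    (hode : ∀ x ∈ I, y'' x + (1 / x + 1 / (x - a)) * y' x
      + ((α * (1 - α) * x - α * (1 - α)) / (x * (x - 1) * (x - a))) * y x = 0) :
    ∀ x ∈ I, HasDerivAt (fun t => t * (a - t) * y' t / (α * (1 - α))) (y x) x :=
  heun_integral_special_parameters_general a α hα0 hα1 I h0 h1 hai y y' y'' hy' hode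
end

section
/- Fix real numbers a > 1, q, α, β, γ with γ < 1 and 2−γ not a nonpositive integer, set δ = 0, τ = 1−γ and ε = α+β+τ. Let I ⊆ (0,1) be an open interval and let y : ℝ → ℝ be twice differentiable on I solving the Heun equation y'' + Py' + Qy = 0 (with these parameters) on I. Then for every x ∈ I the function x ↦ (a−x)^ε · ( τ[₂F₁(ε,τ;1+τ;x/a) + (εx/(a(1+τ)))·₂F₁(ε+1,1+τ;2+τ;x/a)]·y(x) − x·₂F₁(ε,τ;1+τ;x/a)·y'(x) ) has derivative at x equal to ((a−x)^(ε−1)(αβx−q)/(1−x))·₂F₁(ε,τ;1+τ;x/a)·y(x). (This is the Lagrangian identity with auxiliary function h(x) = x^(1−γ)·₂F₁(ε,1−γ;2−γ;x/a), a solution of h'' + Ph' = 0.) -/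
/-!
Write `F = ₂F₁(ε, τ; 1 + τ; ·)` and `h(x) = x^τ F(x/a)`. The bracket multiplying `y` is
`x^γ h'(x) = τ F(z) + z F'(z)` with `z = x/a`, and comparing coefficients with the binomial series
gives `τ F(z) + z F'(z) = τ (1 - z)^(-ε)`. Hence `(a - x)^ε x^γ h'(x) = τ a^ε` is constant, which is
the equation `h'' + P h' = 0` for `δ = 0`. The Lagrangian identity then follows from the product
rule and the Heun equation for `y`.
-/

open Real

namespace FormalMultilinearSeries

variable {𝕜 : Type*} [NontriviallyNormedField 𝕜] [CompleteSpace 𝕜]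

theorem hasDerivAt_ofScalarsSum {c : ℕ → 𝕜} {z : 𝕜} (hz : ‖z‖ₑ < (ofScalars 𝕜 c).radius) :
    HasDerivAt (ofScalarsSum c) (∑' n, (n + 1) * c (n + 1) * z ^ n) z := by
  set p := ofScalars 𝕜 c
  have hzball : z ∈ Metric.eball (0 : 𝕜) p.radius := by simpa using hz
  have hp : HasFPowerSeriesOnBall p.sum p 0 p.radius :=
    p.hasFPowerSeriesOnBall (pos_of_gt hz)
  have hsum := (hp.fderiv.hasSum hzball).mapL (ContinuousLinearMap.apply 𝕜 𝕜 1)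
  rw [zero_add] at hsum
  have hderiv : HasDerivAt p.sum (fderiv 𝕜 p.sum z 1) z :=
    (hp.analyticAt_of_mem hzball).differentiableAt.hasFDerivAt.hasDerivAt
  refine hderiv.congr_deriv ((tsum_congr fun n => ?_).trans hsum.tsum_eq).symm
  simp only [apply_eq_prod_smul_coeff, Finset.prod_const, Finset.card_univ, Fintype.card_fin,
    map_smul, ContinuousLinearMap.apply_apply, derivSeries_coeff_one, coeff_ofScalars, nsmul_eq_mul,
    Nat.cast_add, Nat.cast_one, smul_eq_mul, p]
  ring

end FormalMultilinearSeries

section Hypergeometric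

theorem succ_mul_ordinaryHypergeometricCoefficient_succ {𝕂 : Type*} [Field 𝕂] [CharZero 𝕂]
    (a b c : 𝕂) (n : ℕ) :
    (n + 1) * ordinaryHypergeometricCoefficient a b c (n + 1)
      = a * b / c * ordinaryHypergeometricCoefficient (a + 1) (b + 1) (c + 1) n := by
  have hn : (n + 1 : 𝕂) ≠ 0 := by exact_mod_cast n.succ_ne_zero
  simp only [ordinaryHypergeometricCoefficient, ascPochhammer_succ_left, Polynomial.eval_mul,
    Polynomial.eval_X, Polynomial.eval_comp, Polynomial.eval_add, Polynomial.eval_one,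
    Nat.factorial_succ, Nat.cast_mul, Nat.cast_succ, mul_inv, div_eq_mul_inv]
  field_simp

theorem add_mul_ordinaryHypergeometricCoefficient {𝕂 : Type*} [Field 𝕂] (a b : 𝕂) (n : ℕ) :
    (b + n) * ordinaryHypergeometricCoefficient a b (b + 1) n
      = b * ordinaryHypergeometricCoefficient a (b + 1) (b + 1) n := by
  have hpoch : (ascPochhammer 𝕂 n).eval b * (b + n) = b * (ascPochhammer 𝕂 n).eval (b + 1) := by
    rw [← ascPochhammer_succ_eval, ascPochhammer_succ_left, Polynomial.eval_mul,
      Polynomial.eval_X, Polynomial.eval_comp, Polynomial.eval_add, Polynomial.eval_X,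
      Polynomial.eval_one]
  simp only [ordinaryHypergeometricCoefficient]
  linear_combination ((n.factorial : 𝕂)⁻¹ * (ascPochhammer 𝕂 n).eval a
    * ((ascPochhammer 𝕂 n).eval (b + 1))⁻¹) * hpoch

variable {𝕂 : Type*} (𝔸 : Type*) [RCLike 𝕂] [NormedDivisionRing 𝔸] [NormedAlgebra 𝕂 𝔸]

theorem one_le_radius_ordinaryHypergeometricSeries {a b c : 𝕂} (hc : ∀ n : ℕ, c ≠ -n) :
    1 ≤ (ordinaryHypergeometricSeries 𝔸 a b c).radius := by
  by_cases ha : ∃ n : ℕ, a = -n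
  · obtain ⟨n, rfl⟩ := ha
    simp [ordinaryHypergeometric_radius_top_of_neg_nat₁]
  by_cases hb : ∃ n : ℕ, b = -n
  · obtain ⟨n, rfl⟩ := hb
    simp [ordinaryHypergeometric_radius_top_of_neg_nat₂]
  push Not at ha hb
  have swap {p : 𝕂} (hp : ∀ n : ℕ, p ≠ -n) (n : ℕ) : (n : 𝕂) ≠ -p :=
    fun h => hp n (neg_eq_iff_eq_neg.mp h.symm)
  exact (ordinaryHypergeometricSeries_radius_eq_one 𝔸 a b c
    fun n => ⟨swap ha n, swap hb n, swap hc n⟩).ge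

variable {𝔸} in
theorem enorm_lt_radius_ordinaryHypergeometricSeries {a b c : 𝕂} (hc : ∀ n : ℕ, c ≠ -n) {z : 𝔸}
    (hz : ‖z‖ < 1) : ‖z‖ₑ < (ordinaryHypergeometricSeries 𝔸 a b c).radius :=
  lt_of_lt_of_le (by simpa [enorm_eq_nnnorm, ← NNReal.coe_lt_one] using hz)
    (one_le_radius_ordinaryHypergeometricSeries 𝔸 hc)

theorem hasSum_ordinaryHypergeometric {a b c z : 𝕂} (hc : ∀ n : ℕ, c ≠ -n) (hz : ‖z‖ < 1) :
    HasSum (fun n => ordinaryHypergeometricCoefficient a b c n * z ^ n) (₂F₁ a b c z) := by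
  have := (ordinaryHypergeometricSeries 𝕂 a b c).hasSum
    (x := z) (by simpa using enorm_lt_radius_ordinaryHypergeometricSeries hc hz)
  rw [ordinaryHypergeometricSeries_apply_eq'] at this
  simp only [smul_eq_mul] at this
  exact this

theorem hasDerivAt_ordinaryHypergeometric {a b c z : 𝕂} (hc : ∀ n : ℕ, c ≠ -n) (hz : ‖z‖ < 1) :
    HasDerivAt (₂F₁ a b c) (a * b / c * ₂F₁ (a + 1) (b + 1) (c + 1) z) z := by
  refine (FormalMultilinearSeries.hasDerivAt_ofScalarsSum
    (enorm_lt_radius_ordinaryHypergeometricSeries hc hz)).congr_deriv ?_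
  simp only [ordinaryHypergeometric_eq_tsum, smul_eq_mul, ← tsum_mul_left]
  refine tsum_congr fun n => ?_
  rw [succ_mul_ordinaryHypergeometricCoefficient_succ]
  ring

theorem hasDerivAt_ordinaryHypergeometric_div {a b c s x : 𝕂} (hc : ∀ n : ℕ, c ≠ -n)
    (hx : ‖x / s‖ < 1) :
    HasDerivAt (fun t => ₂F₁ a b c (t / s))
      (a * b / c * ₂F₁ (a + 1) (b + 1) (c + 1) (x / s) / s) x :=
  ((hasDerivAt_ordinaryHypergeometric hc hx).comp x ((hasDerivAt_id x).div_const s)).congr_deriv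
    (by ring)

end Hypergeometric

theorem ordinaryHypergeometric_self_eq_one_sub_rpow {a b z : ℝ} (hb : ∀ n : ℕ, b ≠ -n)
    (hz : |z| < 1) : ₂F₁ a b b z = (1 - z) ^ (-a) := by
  have hbin := (Real.one_add_rpow_hasFPowerSeriesOnBall_zero (a := -a)).hasSum (y := -z)
    (by simpa [enorm_eq_nnnorm, ← NNReal.coe_lt_one] using hz)
  rw [binomialSeries_eq_ordinaryHypergeometricSeries
    (fun n h => hb n (neg_eq_iff_eq_neg.mp h.symm))] at hbin
  simp only [FormalMultilinearSeries.compContinuousLinearMap_apply, Function.comp_def,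
    neg_apply, ContinuousLinearMap.id_apply, neg_neg, zero_add] at hbin
  rw [sub_eq_add_neg]
  exact hbin.tsum_eq

theorem mul_ordinaryHypergeometric_add_mul_ordinaryHypergeometric_succ {a b z : ℝ}
    (hb : ∀ n : ℕ, b + 1 ≠ -n) (hz : |z| < 1) :
    b * ₂F₁ a b (b + 1) z + z * (a * b / (b + 1) * ₂F₁ (a + 1) (b + 1) (b + 1 + 1) z)
      = b * (1 - z) ^ (-a) := by
  have hb' : ∀ n : ℕ, b + 1 + 1 ≠ -n := fun n h => hb (n + 1) (by push_cast; linarith)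
  have hF := hasSum_ordinaryHypergeometric (a := a) (b := b) hb hz
  have hzF' : HasSum (fun n : ℕ => n * ordinaryHypergeometricCoefficient a b (b + 1) n * z ^ n)
      (z * (a * b / (b + 1) * ₂F₁ (a + 1) (b + 1) (b + 1 + 1) z)) := by
    rw [← hasSum_nat_add_iff' 1]
    simp only [Finset.range_one, Finset.sum_singleton, Nat.cast_zero, zero_mul, sub_zero]
    refine (((hasSum_ordinaryHypergeometric (a := a + 1) (b := b + 1) hb' hz).mul_left
      (a * b / (b + 1))).mul_left z).congr_fun fun n => ?_
    push_cast
    rw [succ_mul_ordinaryHypergeometricCoefficient_succ]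
    ring
  have hbinom := (hasSum_ordinaryHypergeometric (a := a) (b := b + 1) hb hz).mul_left b
  rw [ordinaryHypergeometric_self_eq_one_sub_rpow hb hz] at hbinom
  refine ((hF.mul_left b).add hzF').unique (hbinom.congr_fun fun n => ?_)
  linear_combination (z ^ n) * add_mul_ordinaryHypergeometricCoefficient a b n

theorem rpow_mul_hypergeometric_bracket_eq {a ε τ t : ℝ} (hτ : ∀ n : ℕ, 1 + τ ≠ -n)
    (ht : |t| < a) :
    (a - t) ^ ε * (τ * (₂F₁ ε τ (1 + τ) (t / a)
      + ε * t / (a * (1 + τ)) * ₂F₁ (ε + 1) (1 + τ) (2 + τ) (t / a))) = τ * a ^ ε := by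
  have ha : 0 < a := (abs_nonneg t).trans_lt ht
  have hat : 0 < a - t := by linarith [le_abs_self t]
  have hz : |t / a| < 1 := by rwa [abs_div, abs_of_pos ha, div_lt_one ha]
  have hbinom := mul_ordinaryHypergeometric_add_mul_ordinaryHypergeometric_succ (a := ε)
    (fun n => by rw [add_comm]; exact hτ n) hz
  rw [show τ + 1 = 1 + τ by ring, show 1 + τ + 1 = 2 + τ by ring,
    show 1 - t / a = (a - t) / a by field_simp, div_rpow hat.le ha.le, rpow_neg hat.le,
    rpow_neg ha.le] at hbinom
  calc (a - t) ^ ε * (τ * (₂F₁ ε τ (1 + τ) (t / a)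
        + ε * t / (a * (1 + τ)) * ₂F₁ (ε + 1) (1 + τ) (2 + τ) (t / a)))
      = (a - t) ^ ε * (τ * ₂F₁ ε τ (1 + τ) (t / a)
        + t / a * (ε * τ / (1 + τ) * ₂F₁ (ε + 1) (1 + τ) (2 + τ) (t / a))) := by
        field_simp
    _ = τ * a ^ ε := by
        rw [hbinom]
        field_simp [(rpow_pos_of_pos hat ε).ne', (rpow_pos_of_pos ha ε).ne']

theorem hasDerivAt_rpow_mul_hypergeometric_bracket {a ε τ x : ℝ} (hτ : ∀ n : ℕ, 1 + τ ≠ -n)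
    (hx : |x| < a) :
    HasDerivAt (fun t => (a - t) ^ ε * (τ * (₂F₁ ε τ (1 + τ) (t / a)
      + ε * t / (a * (1 + τ)) * ₂F₁ (ε + 1) (1 + τ) (2 + τ) (t / a)))) 0 x :=
  (hasDerivAt_const x (τ * a ^ ε)).congr_of_eventuallyEq <|
    Filter.eventually_of_mem (Ioo_mem_nhds (abs_lt.mp hx).1 (abs_lt.mp hx).2)
      fun _ ht => rpow_mul_hypergeometric_bracket_eq hτ (abs_lt.mpr ht)

theorem heun_integral_hypergeometric_h_delta_zero_general
    (a q α β γ τ ε : ℝ) (ha : 1 < a)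
    (hγint : ∀ n : ℕ, 2 - γ ≠ -(n : ℝ))
    (hτ : τ = 1 - γ)
    (I : Set ℝ)
    (hIsub : I ⊆ Set.Ioo (0 : ℝ) 1)
    (y y' y'' : ℝ → ℝ)
    (hy : ∀ x ∈ I, HasDerivAt y (y' x) x)
    (hy' : ∀ x ∈ I, HasDerivAt y' (y'' x) x)
    (hode : ∀ x ∈ I, y'' x
      + (γ / x + (0 : ℝ) / (x - 1) + ε / (x - a)) * y' x
      + ((α * β * x - q) / (x * (x - 1) * (x - a))) * y x = 0) :
    ∀ x ∈ I, HasDerivAt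
      (fun t => (a - t) ^ ε *
        (τ * (₂F₁ ε τ (1 + τ) (t / a)
            + ε * t / (a * (1 + τ)) * ₂F₁ (ε + 1) (1 + τ) (2 + τ) (t / a)) * y t
          - t * ₂F₁ ε τ (1 + τ) (t / a) * y' t))
      ((a - x) ^ (ε - 1) * (α * β * x - q) / (1 - x)
        * ₂F₁ ε τ (1 + τ) (x / a) * y x) x := by
  intro x hx
  obtain ⟨hx0, hx1⟩ := hIsub hx
  have ha0 : 0 < a := by linarith
  have hc : ∀ n : ℕ, 1 + τ ≠ -n := fun n h => hγint n (by linarith)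
  have hax : 0 < a - x := by linarith
  have hbracket := hasDerivAt_rpow_mul_hypergeometric_bracket (a := a) (ε := ε) hc
    (abs_lt.mpr ⟨by linarith, by linarith⟩)
  have hF := hasDerivAt_ordinaryHypergeometric_div (a := ε) (b := τ) hc (x := x) (s := a)
    (by rw [Real.norm_eq_abs, abs_of_pos (by positivity), div_lt_one (by positivity)]; linarith)
  rw [show τ + 1 = 1 + τ by ring, show 1 + τ + 1 = 2 + τ by ring] at hF
  have hpow : HasDerivAt (fun t => (a - t) ^ ε) (-1 * ε * (a - x) ^ (ε - 1)) x :=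
    ((hasDerivAt_id x).const_sub a).rpow_const (Or.inl hax.ne')
  have hW := (hbracket.mul (hy x hx)).sub ((hpow.mul ((hasDerivAt_id x).mul hF)).mul (hy' x hx))
  refine (hW.congr_deriv ?_).congr_of_eventuallyEq (Filter.Eventually.of_forall fun t => by
    simp only [Pi.mul_apply, Pi.sub_apply, id]; ring)
  have hy'' : y'' x = -((γ / x + ε / (x - a)) * y' x)
      - (α * β * x - q) / (x * (x - 1) * (x - a)) * y x := by
    linear_combination hode x hx
  have hsplit : (a - x) ^ ε = (a - x) ^ (ε - 1) * (a - x) := by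
    rw [← rpow_add_one hax.ne']; ring_nf
  simp only [Pi.mul_apply, id]
  rw [hy'', hsplit, hτ]
  field_simp [hx0.ne', (by linarith : x - 1 ≠ 0), (by linarith : x - a ≠ 0),
    (by linarith : (1:ℝ) - x ≠ 0), (by linarith : a ≠ 0)]
  ring

/-- Lagrangian identity for the Heun equation with `δ = 0` and auxiliary function
`h(x) = x^(1-γ) ₂F₁(ε, 1-γ; 2-γ; x/a)` (a solution of `h'' + P h' = 0`): with
`τ = 1-γ`, `ε = α+β+τ`, for any solution `y` on an open interval `I ⊆ (0,1)` (`a > 1`,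
`γ < 1`, `2-γ` not a nonpositive integer), the function
`x ↦ (a-x)^ε (τ[₂F₁(ε,τ;1+τ;x/a) + (εx/(a(1+τ)))₂F₁(ε+1,1+τ;2+τ;x/a)] y(x)
  - x ₂F₁(ε,τ;1+τ;x/a) y'(x))`
has derivative `((a-x)^(ε-1)(αβx-q)/(1-x)) ₂F₁(ε,τ;1+τ;x/a) y(x)`. -/
theorem heun_integral_hypergeometric_h_delta_zero
    (a q α β γ τ ε : ℝ) (ha : 1 < a) (hγ : γ < 1)
    (hγint : ∀ n : ℕ, 2 - γ ≠ -(n : ℝ))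
    (hτ : τ = 1 - γ) (hε : ε = α + β + τ)
    (I : Set ℝ) (hI : IsOpen I) (hIconn : I.OrdConnected)
    (hIsub : I ⊆ Set.Ioo (0 : ℝ) 1)
    (y y' y'' : ℝ → ℝ)
    (hy : ∀ x ∈ I, HasDerivAt y (y' x) x)
    (hy' : ∀ x ∈ I, HasDerivAt y' (y'' x) x)
    (hode : ∀ x ∈ I, y'' x
      + (γ / x + (0 : ℝ) / (x - 1) + ε / (x - a)) * y' x
      + ((α * β * x - q) / (x * (x - 1) * (x - a))) * y x = 0) :
    ∀ x ∈ I, HasDerivAt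
      (fun t => (a - t) ^ ε *
        (τ * (₂F₁ ε τ (1 + τ) (t / a)
            + ε * t / (a * (1 + τ)) * ₂F₁ (ε + 1) (1 + τ) (2 + τ) (t / a)) * y t
          - t * ₂F₁ ε τ (1 + τ) (t / a) * y' t))
      ((a - x) ^ (ε - 1) * (α * β * x - q) / (1 - x)
        * ₂F₁ ε τ (1 + τ) (x / a) * y x) x :=
  heun_integral_hypergeometric_h_delta_zero_general a q α β γ τ ε ha hγint hτ I hIsub y y' y'' hy
    hy' hode
end

section
/- Fix real parameters a > 1, q, α, β, γ, δ with ε = α+β+1−γ−δ, set Q(x) = (αβx−q)/(x(x−1)(x−a)) and K(x) = (α+β+1)x² − [a(γ+δ) + α+β+1 − δ]x + aγ. Let I ⊆ (a,∞) be an open interval, let y : ℝ → ℝ be twice differentiable on I solving the Heun equation y''(x) + (γ/x + δ/(x−1) + ε/(x−a))y'(x) + Q(x)y(x) = 0 on I, and let h : ℝ → ℝ be twice differentiable on I with h''(x) + Q(x)h(x) = 0 on I. Then for every x ∈ I the function x ↦ x^γ(x−1)^δ(x−a)^ε (h'(x)y(x) − h(x)y'(x)) has derivative at x equal to x^(γ−1)(x−1)^(δ−1)(x−a)^(ε−1)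 K(x) h'(x) y(x). (Equivalently, ∫ x^(γ−1)(x−1)^(δ−1)(x−a)^(ε−1) K(x)h'(x)y(x)dx = x^γ(x−1)^δ(x−a)^ε [h'(x)y(x) − h(x)y'(x)] + c.) -/
open Real

/-! With `W = h' y - h y'`, the two equations give `W' = h'' y - h y'' = P h y'`, and the weight
`μ = x^γ (x-1)^δ (x-a)^ε` satisfies `μ' = P μ`. Hence `(μ W)' = P μ (W + h y') = P μ h' y`,
and `P μ = x^(γ-1) (x-1)^(δ-1) (x-a)^(ε-1) K` by the Fuchsian relation for `ε`. -/

theorem hasDerivAt_mul_wronskian_of_ode {μ y y' y'' h h' h'' : ℝ → ℝ} {x p r : ℝ}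
    (hμ : HasDerivAt μ (μ x * p) x)
    (hy : HasDerivAt y (y' x) x) (hy' : HasDerivAt y' (y'' x) x)
    (hodey : y'' x + p * y' x + r * y x = 0)
    (hh : HasDerivAt h (h' x) x) (hh' : HasDerivAt h' (h'' x) x)
    (hodeh : h'' x + r * h x = 0) :
    HasDerivAt (fun t => μ t * (h' t * y t - h t * y' t)) (μ x * p * h' x * y x) x := by
  refine (hμ.mul ((hh'.mul hy).sub (hh.mul hy'))).congr_deriv ?_
  simp only [Pi.mul_apply, Pi.sub_apply]
  linear_combination (μ x * y x) * hodeh - μ x * h x * hodey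

theorem hasDerivAt_rpow_sub_const {c e x : ℝ} (hx : x ≠ c) :
    HasDerivAt (fun t => (t - c) ^ e) ((x - c) ^ e * (e / (x - c))) x := by
  have hxc : x - c ≠ 0 := sub_ne_zero.mpr hx
  refine (((hasDerivAt_id x).sub_const c).rpow_const (p := e) (Or.inl hxc)).congr_deriv ?_
  rw [id, rpow_sub_one hxc]
  ring

theorem hasDerivAt_heun_weight {a γ δ ε x : ℝ} (hx0 : x ≠ 0) (hx1 : x ≠ 1) (hxa : x ≠ a) :
    HasDerivAt (fun t => t ^ γ * (t - 1) ^ δ * (t - a) ^ ε)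
      (x ^ γ * (x - 1) ^ δ * (x - a) ^ ε * (γ / x + δ / (x - 1) + ε / (x - a))) x := by
  have h0 := hasDerivAt_rpow_sub_const (c := 0) (e := γ) hx0
  simp only [sub_zero] at h0
  refine ((h0.mul (hasDerivAt_rpow_sub_const hx1)).mul
    (hasDerivAt_rpow_sub_const hxa)).congr_deriv ?_
  simp only [Pi.mul_apply]
  ring

theorem heun_weight_mul_logDeriv_eq {a α β γ δ ε x : ℝ} (hε : ε = α + β + 1 - γ - δ)
    (hx0 : x ≠ 0) (hx1 : x ≠ 1) (hxa : x ≠ a) :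
    x ^ γ * (x - 1) ^ δ * (x - a) ^ ε * (γ / x + δ / (x - 1) + ε / (x - a)) =
      x ^ (γ - 1) * (x - 1) ^ (δ - 1) * (x - a) ^ (ε - 1) *
        ((α + β + 1) * x ^ 2 - (a * (γ + δ) + α + β + 1 - δ) * x + a * γ) := by
  have hx1' : x - 1 ≠ 0 := sub_ne_zero.mpr hx1
  have hxa' : x - a ≠ 0 := sub_ne_zero.mpr hxa
  rw [rpow_sub_one hx0, rpow_sub_one hx1', rpow_sub_one hxa', hε]
  field_simp
  ring

theorem heun_integral_h_no_first_derivative_general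
    (a q α β γ δ ε : ℝ) (ha : 1 < a) (hε : ε = α + β + 1 - γ - δ)
    (K : ℝ → ℝ)
    (hK : ∀ x, K x = (α + β + 1) * x ^ 2 - (a * (γ + δ) + α + β + 1 - δ) * x + a * γ)
    (I : Set ℝ) (hIsub : I ⊆ Set.Ioi a)
    (y y' y'' h h' h'' : ℝ → ℝ)
    (hy : ∀ x ∈ I, HasDerivAt y (y' x) x)
    (hy' : ∀ x ∈ I, HasDerivAt y' (y'' x) x)
    (hodey : ∀ x ∈ I, y'' x + (γ / x + δ / (x - 1) + ε / (x - a)) * y' x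
      + ((α * β * x - q) / (x * (x - 1) * (x - a))) * y x = 0)
    (hh : ∀ x ∈ I, HasDerivAt h (h' x) x)
    (hh' : ∀ x ∈ I, HasDerivAt h' (h'' x) x)
    (hodeh : ∀ x ∈ I, h'' x + ((α * β * x - q) / (x * (x - 1) * (x - a))) * h x = 0) :
    ∀ x ∈ I, HasDerivAt
      (fun t => t ^ γ * (t - 1) ^ δ * (t - a) ^ ε * (h' t * y t - h t * y' t))
      (x ^ (γ - 1) * (x - 1) ^ (δ - 1) * (x - a) ^ (ε - 1) * K x * h' x * y x) x := by
  intro x hx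
  have hxa : a < x := hIsub hx
  have hx0 : x ≠ 0 := by linarith
  have hx1 : x ≠ 1 := by linarith
  have key := hasDerivAt_mul_wronskian_of_ode (hasDerivAt_heun_weight hx0 hx1 hxa.ne')
    (hy x hx) (hy' x hx) (hodey x hx) (hh x hx) (hh' x hx) (hodeh x hx)
  rwa [heun_weight_mul_logDeriv_eq hε hx0 hx1 hxa.ne', ← hK] at key

/-- Lagrangian identity for the Heun equation with auxiliary function `h` solving
`h'' + Q h = 0`: with `ε = α+β+1-γ-δ`, `Q x = (αβx-q)/(x(x-1)(x-a))` and
`K(x) = (α+β+1)x² - [a(γ+δ)+α+β+1-δ]x + aγ` (so that `P x = K x/(x(x-1)(x-a))`),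
for any solution `y` of the Heun equation on an open interval `I ⊆ (a,∞)` (`a > 1`),
the function `x ↦ x^γ (x-1)^δ (x-a)^ε (h'(x)y(x) - h(x)y'(x))` has derivative
`x^(γ-1) (x-1)^(δ-1) (x-a)^(ε-1) K(x) h'(x) y(x)` at every point of `I`. -/
theorem heun_integral_h_no_first_derivative
    (a q α β γ δ ε : ℝ) (ha : 1 < a) (hε : ε = α + β + 1 - γ - δ)
    (K : ℝ → ℝ)
    (hK : ∀ x, K x = (α + β + 1) * x ^ 2 - (a * (γ + δ) + α + β + 1 - δ) * x + a * γ)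
    (I : Set ℝ) (hI : IsOpen I) (hIconn : I.OrdConnected) (hIsub : I ⊆ Set.Ioi a)
    (y y' y'' h h' h'' : ℝ → ℝ)
    (hy : ∀ x ∈ I, HasDerivAt y (y' x) x)
    (hy' : ∀ x ∈ I, HasDerivAt y' (y'' x) x)
    (hodey : ∀ x ∈ I, y'' x + (γ / x + δ / (x - 1) + ε / (x - a)) * y' x
      + ((α * β * x - q) / (x * (x - 1) * (x - a))) * y x = 0)
    (hh : ∀ x ∈ I, HasDerivAt h (h' x) x)
    (hh' : ∀ x ∈ I, HasDerivAt h' (h'' x) x)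
    (hodeh : ∀ x ∈ I, h'' x + ((α * β * x - q) / (x * (x - 1) * (x - a))) * h x = 0) :
    ∀ x ∈ I, HasDerivAt
      (fun t => t ^ γ * (t - 1) ^ δ * (t - a) ^ ε * (h' t * y t - h t * y' t))
      (x ^ (γ - 1) * (x - 1) ^ (δ - 1) * (x - a) ^ (ε - 1) * K x * h' x * y x) x :=
  heun_integral_h_no_first_derivative_general a q α β γ δ ε ha hε K hK I hIsub y y' y'' h h' h'' hy
    hy' hodey hh hh' hodeh
end
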